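/- Let p be an odd natural number and X₂ = (2A−1)·2^{k} with A, k natural numbers, 1 ≤ k ≤ w−3. Then T_{p+2^{w−k}}(X₂) ≡ T_p(X₂) (mod 2^w), and T_{p+2^{w−k−1}}(X₂) ≢ T_p(X₂) (mod 2^w). -/

import Mathlib

/-!
By the product-to-sum identity `T (m + k) - T (m - k) = 2 (X² - 1) U (m - 1) U (k - 1)` with
`m = p + 2^j`, `k = 2^j`, the difference `T (p + 2^(j+1)) x - T p x` factors as
`2 (x² - 1) · U (p + 2^j - 1) x · U (2^j - 1) x`. For even `x` and odd `p` the first two factors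
are odd (`U` at an even index is `±1` modulo `x`), while iterating `U (2n - 1) = 2 T n U (n - 1)`,
with `T (2n) = 2 T n ² - 1` odd, gives `U (2^j - 1) x = 2^j x · odd`. So for `x = (2A - 1) 2^k`
the difference is exactly divisible by `2^(j + k + 1)`.
-/

namespace Polynomial.Chebyshev

variable {R : Type*} [CommRing R]

theorem T_add_sub_T_sub (m k : ℤ) :
    T R (m + k) - T R (m - k) = 2 * (X ^ 2 - 1) * U R (m - 1) * U R (k - 1) := by
  induction k using Polynomial.Chebyshev.induct with
  | zero => simp
  | one =>
    have h₁ := T_eq_X_mul_T_sub_pol_U R (m - 1)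
    have h₂ := T_sub_one R m
    rw [sub_self, U_zero]
    linear_combination (norm := ring_nf) 2 * h₁ - h₂
  | add_two k ih1 ih2 =>
    have h₁ := T_add_two R (m + k)
    have h₂ := T_sub_two R (m - k)
    have h₃ := U_add_two R (k - 1)
    linear_combination (norm := ring_nf)
      h₁ - h₂ + 2 * (X : R[X]) * ih1 - ih2 - 2 * (X ^ 2 - 1) * U R (m - 1) * h₃
  | neg_add_one k ih1 ih2 =>
    have h₁ := T_add_two R (m + (-k - 1))
    have h₂ := T_sub_two R (m - (-k - 1))
    have h₃ := U_add_two R (-k - 2)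
    linear_combination (norm := ring_nf)
      h₁ - h₂ + 2 * (X : R[X]) * ih1 - ih2 - 2 * (X ^ 2 - 1) * U R (m - 1) * h₃

theorem two_mul_T_mul_U (m k : ℤ) :
    2 * T R m * U R (k - 1) = U R (m + k - 1) - U R (m - k - 1) := by
  induction k using Polynomial.Chebyshev.induct with
  | zero => simp
  | one =>
    have h := two_mul_T_eq_U_sub_U R (m - 2)
    rw [sub_self, U_zero]
    linear_combination (norm := ring_nf) h
  | add_two k ih1 ih2 =>
    have h₁ := U_add_two R (m + k - 1)
    have h₂ := U_sub_two R (m - k - 1)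
    have h₃ := U_add_two R (k - 1)
    linear_combination (norm := ring_nf) h₂ - h₁ + 2 * (X : R[X]) * ih1 - ih2 + 2 * T R m * h₃
  | neg_add_one k ih1 ih2 =>
    have h₁ := U_add_two R (m + (-k - 1) - 1)
    have h₂ := U_sub_two R (m - (-k - 1) - 1)
    have h₃ := U_add_two R (-k - 2)
    linear_combination (norm := ring_nf) h₂ - h₁ + 2 * (X : R[X]) * ih1 - ih2 + 2 * T R m * h₃

theorem odd_eval_T_two_mul (x : R) (n : ℤ) : Odd ((T R (2 * n)).eval x) := by
  have h := congrArg (eval x) (T_mul_T R n n)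
  rw [← two_mul, sub_self, T_zero] at h
  simp only [eval_mul, eval_add, eval_ofNat, eval_one] at h
  exact ⟨(T R n).eval x ^ 2 - 1, by linear_combination -h⟩

theorem odd_eval_U_of_even {x : R} (hx : Even x) {n : ℤ} (hn : Even n) :
    Odd ((U R n).eval x) := by
  obtain ⟨q, hq⟩ := sub_dvd_eval_sub x 0 (U R n)
  have hunit : Odd (((n / 2).negOnePow : ℤ) : R) := by
    rcases Int.units_eq_one_or (n / 2).negOnePow with h | h <;> simp [h]
  rw [sub_zero, U_eval_zero_of_even R hn, sub_eq_iff_eq_add] at hq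
  rw [hq]
  exact (hx.mul_right q).add_odd hunit

theorem U_two_mul_sub_one (n : ℤ) : U R (2 * n - 1) = 2 * T R n * U R (n - 1) := by
  rw [two_mul_T_mul_U, sub_self, zero_sub, U_neg_one, sub_zero, two_mul]

theorem exists_odd_eval_U_two_pow_sub_one (x : R) (j : ℕ) :
    ∃ c, Odd c ∧ (U R (2 ^ (j + 1) - 1)).eval x = 2 ^ (j + 1) * x * c := by
  induction j with
  | zero => exact ⟨1, odd_one, by simp [U_one]⟩
  | succ j ih =>
    obtain ⟨c, hc, hU⟩ := ih
    refine ⟨(T R (2 * 2 ^ j)).eval x * c, (odd_eval_T_two_mul x _).mul hc, ?_⟩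
    rw [pow_succ' (2 : ℤ) (j + 1), U_two_mul_sub_one, eval_mul, eval_mul, hU, ← pow_succ']
    simp only [eval_ofNat]
    ring

theorem exists_odd_eval_T_add_two_pow_sub_eval_T {x : R} (hx : Even x) {p : ℤ} (hp : Odd p)
    (j : ℕ) : ∃ c, Odd c ∧
      (T R (p + 2 ^ (j + 2))).eval x - (T R p).eval x = 2 ^ (j + 2) * x * c := by
  obtain ⟨c, hc, hU⟩ := exists_odd_eval_U_two_pow_sub_one x j
  have hdiff := congrArg (eval x) (T_add_sub_T_sub (R := R) (p + 2 ^ (j + 1)) (2 ^ (j + 1)))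
  rw [add_sub_cancel_right, add_assoc, ← two_mul, ← pow_succ'] at hdiff
  simp only [eval_mul, eval_sub, eval_pow, eval_X, eval_one, eval_ofNat, hU] at hdiff
  have hx2 : Odd (x ^ 2 - 1) := (hx.pow_of_ne_zero two_ne_zero).sub_odd odd_one
  have hidx : Even (p + 2 ^ (j + 1) - 1) := by
    rw [add_sub_right_comm]
    exact (hp.sub_odd odd_one).add (even_two.pow_of_ne_zero j.succ_ne_zero)
  refine ⟨(x ^ 2 - 1) * (U R (p + 2 ^ (j + 1) - 1)).eval x * c,
    (hx2.mul (odd_eval_U_of_even hx hidx)).mul hc, ?_⟩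
  rw [hdiff]
  ring

end Polynomial.Chebyshev

open Polynomial Polynomial.Chebyshev

theorem Int.not_two_pow_succ_dvd_two_pow_mul_odd {n : ℕ} {c : ℤ} (hc : Odd c) :
    ¬ (2 : ℤ) ^ (n + 1) ∣ 2 ^ n * c := by
  rw [pow_succ, mul_dvd_mul_iff_left (pow_ne_zero n two_ne_zero), ← even_iff_two_dvd,
    Int.not_even_iff_odd]
  exact hc

theorem chebyshev_degree_period_X2_general (w A k p : ℕ) (hk : 1 ≤ k)
    (hkw : k ≤ w - 3) (hp : Odd p) :
    ((Polynomial.Chebyshev.T ℤ ((p : ℤ) + 2 ^ (w - k))).eval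
        ((2 * (A : ℤ) - 1) * 2 ^ k) ≡
      (Polynomial.Chebyshev.T ℤ (p : ℤ)).eval ((2 * (A : ℤ) - 1) * 2 ^ k)
        [ZMOD 2 ^ w]) ∧
    ¬ ((Polynomial.Chebyshev.T ℤ ((p : ℤ) + 2 ^ (w - k - 1))).eval
        ((2 * (A : ℤ) - 1) * 2 ^ k) ≡
      (Polynomial.Chebyshev.T ℤ (p : ℤ)).eval ((2 * (A : ℤ) - 1) * 2 ^ k)
        [ZMOD 2 ^ w]) := by
  set x : ℤ := (2 * (A : ℤ) - 1) * 2 ^ k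
  have hx : Even x := (even_two.pow_of_ne_zero (by omega)).mul_left _
  have hdiff (j : ℕ) : ∃ c, Odd c ∧
      (T ℤ (p + 2 ^ (j + 2))).eval x - (T ℤ p).eval x = 2 ^ (j + 2 + k) * c := by
    obtain ⟨c, hc, h⟩ := exists_odd_eval_T_add_two_pow_sub_eval_T hx hp.natCast j
    exact ⟨(2 * A - 1) * c, Odd.mul ⟨A - 1, by ring⟩ hc, by rw [h, pow_add]; ring⟩
  constructor
  · obtain ⟨c, -, h⟩ := hdiff (w - k - 2)
    rw [show w - k - 2 + 2 = w - k by omega, show w - k + k = w by omega] at h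
    exact (Int.modEq_iff_dvd.2 (Dvd.intro c h.symm)).symm
  · obtain ⟨c, hc, h⟩ := hdiff (w - k - 3)
    rw [show w - k - 3 + 2 = w - k - 1 by omega, show w - k - 1 + k = w - 1 by omega] at h
    intro hmod
    have hdvd : 2 ^ w ∣ 2 ^ (w - 1) * c := h ▸ hmod.symm.dvd
    exact Int.not_two_pow_succ_dvd_two_pow_mul_odd (n := w - 1) hc
      (by rwa [Nat.sub_add_cancel (by omega)])

/-- Let `p` be odd and `X₂ = (2A−1)·2^k` with `A ≥ 1`, `1 ≤ k ≤ w−3`. Then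
`T_{p+2^{w−k}}(X₂) ≡ T_p(X₂) (mod 2^w)` but
`T_{p+2^{w−k−1}}(X₂) ≢ T_p(X₂) (mod 2^w)`. -/
theorem chebyshev_degree_period_X2 (w A k p : ℕ) (hA : 1 ≤ A) (hk : 1 ≤ k)
    (hw : 3 ≤ w) (hkw : k ≤ w - 3) (hp : Odd p) :
    ((Polynomial.Chebyshev.T ℤ ((p : ℤ) + 2 ^ (w - k))).eval
        ((2 * (A : ℤ) - 1) * 2 ^ k) ≡
      (Polynomial.Chebyshev.T ℤ (p : ℤ)).eval ((2 * (A : ℤ) - 1) * 2 ^ k)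
        [ZMOD 2 ^ w]) ∧
    ¬ ((Polynomial.Chebyshev.T ℤ ((p : ℤ) + 2 ^ (w - k - 1))).eval
        ((2 * (A : ℤ) - 1) * 2 ^ k) ≡
      (Polynomial.Chebyshev.T ℤ (p : ℤ)).eval ((2 * (A : ℤ) - 1) * 2 ^ k)
        [ZMOD 2 ^ w]) :=
  chebyshev_degree_period_X2_general w A k p hk hkw hp
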